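/- arXiv:2402.04436 — 6 statements merged into one kernel-verified Lean document; each statement's English description precedes it below -/
import Mathlib

section
/- Let X and Y be complete metric spaces, let Ω be a point-to-set map from X to Y, and let σ : X × Y → ℝ. Suppose Ω is continuous (both open and closed) at a point x̄ ∈ X, and σ is continuous at every point of {x̄} × Ω(x̄). Then the point-to-set map Min, defined by Min(x) = {y ∈ Ω(x) : σ(x,y) ≤ σ(x,y′) for all y′ ∈ Ω(x)}, is closed at x̄: for every sequence x_k → x̄ in X and every convergent sequence y_k → ȳ in Y with y_k ∈ Min(x_k) for all k, one has ȳ ∈ Min(x̄). -/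
open Filter Topology

/-- Hogan's theorem: if the constraint map `Ω` is continuous (open and closed) at `xbar`
and `σ` is continuous on `{xbar} × Ω xbar`, then the global-minimizer map `Min` is closed
at `xbar`. -/
theorem min_map_closed_at
    {X Y : Type*} [MetricSpace X] [CompleteSpace X] [MetricSpace Y] [CompleteSpace Y]
    (Ω : X → Set Y) (σ : X × Y → ℝ) (xbar : X)
    (hopen : ∀ x : ℕ → X, Tendsto x atTop (𝓝 xbar) → ∀ ybar ∈ Ω xbar,
      ∃ (ℓ : ℕ) (y : ℕ → Y), Tendsto y atTop (𝓝 ybar) ∧ ∀ k ≥ ℓ, y k ∈ Ω (x k))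
    (hclosed : ∀ x : ℕ → X, Tendsto x atTop (𝓝 xbar) → ∀ y : ℕ → Y,
      (∀ k, y k ∈ Ω (x k)) → ∀ ybar : Y, Tendsto y atTop (𝓝 ybar) → ybar ∈ Ω xbar)
    (hσ : ∀ y ∈ Ω xbar, ContinuousAt σ (xbar, y)) :
    ∀ x : ℕ → X, Tendsto x atTop (𝓝 xbar) →
      ∀ y : ℕ → Y,
        (∀ k, y k ∈ Ω (x k) ∧ ∀ y' ∈ Ω (x k), σ (x k, y k) ≤ σ (x k, y')) →
        ∀ ybar : Y, Tendsto y atTop (𝓝 ybar) →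
          ybar ∈ Ω xbar ∧ ∀ y' ∈ Ω xbar, σ (xbar, ybar) ≤ σ (xbar, y') := by
  intro x hx y hy ybar hybar
  have hmem : ybar ∈ Ω xbar := hclosed x hx y (fun k => (hy k).1) ybar hybar
  refine ⟨hmem, fun y' hy' => ?_⟩
  obtain ⟨ℓ, z, hz, hzmem⟩ := hopen x hx y' hy'
  have h1 : Tendsto (fun k => σ (x k, y k)) atTop (𝓝 (σ (xbar, ybar))) :=
    (hσ ybar hmem).tendsto.comp (hx.prodMk_nhds hybar)
  have h2 : Tendsto (fun k => σ (x k, z k)) atTop (𝓝 (σ (xbar, y'))) :=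
    (hσ y' hy').tendsto.comp (hx.prodMk_nhds hz)
  refine le_of_tendsto_of_tendsto h1 h2 ?_
  filter_upwards [eventually_ge_atTop ℓ] with k hk
  exact (hy k).2 (z k) (hzmem k hk)
end

section
/- Fix n and d. Let {Δ_k} be a sequence of n×n dissimilarity matrices converging in Frobenius norm to an n×n dissimilarity matrix Δ_∞, and for each k let D_k ∈ Min(Δ_k). Then the sequence {D_k} has an accumulation point: there is a subsequence of {D_k} that converges in Frobenius norm to some n×n EDM-1 matrix of embedding dimension at most d. -/
open Filter Topology

/-- The Frobenius norm of an `n × n` real matrix. -/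
noncomputable def frobNorm {n : ℕ} (A : Matrix (Fin n) (Fin n) ℝ) : ℝ :=
  Real.sqrt (∑ i, ∑ j, (A i j) ^ 2)

/-- An `n × n` dissimilarity matrix: symmetric, nonnegative, with zero diagonal. -/
def IsDissim {n : ℕ} (Δ : Matrix (Fin n) (Fin n) ℝ) : Prop :=
  (∀ i j, Δ i j = Δ j i) ∧ (∀ i j, 0 ≤ Δ i j) ∧ (∀ i, Δ i i = 0)

/-- `D` is EDM-1 of embedding dimension at most `d`: entries are pairwise Euclidean
distances of `n` points in `ℝ^d`. -/
def IsEDM1 (d : ℕ) {n : ℕ} (D : Matrix (Fin n) (Fin n) ℝ) : Prop :=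
  ∃ z : Fin n → EuclideanSpace ℝ (Fin d), ∀ i j, D i j = ‖z i - z j‖

/-- The set of global minimizers of `‖· - Δ‖_F` over the cone of `n × n` EDM-1
matrices of embedding dimension at most `d`. -/
def MinSet (d : ℕ) {n : ℕ} (Δ : Matrix (Fin n) (Fin n) ℝ) :
    Set (Matrix (Fin n) (Fin n) ℝ) :=
  {D | IsEDM1 d D ∧ ∀ D', IsEDM1 d D' → frobNorm (D - Δ) ≤ frobNorm (D' - Δ)}

/-!
The minimizers are uniformly bounded: comparing `D_k` with the zero matrix (which is EDM-1) gives
`‖D_k - Δ_k‖_F ≤ ‖Δ_k‖_F`, so every entry of `D_k` is at most `2 ‖Δ_k‖_F`, and `‖Δ_k‖_F` is bounded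
because `Δ_k` converges. A bounded EDM-1 matrix is the distance matrix of a configuration in a fixed
closed ball of `(ℝ^d)^n` (translate one point to the origin); by compactness of that ball a
subsequence of configurations converges, and the distance matrices converge with it to the
distance matrix of the limit configuration.
-/

section FrobNorm

variable {n : ℕ}

lemma abs_apply_le_frobNorm (A : Matrix (Fin n) (Fin n) ℝ) (i j : Fin n) :
    |A i j| ≤ frobNorm A := by
  rw [frobNorm, ← Real.sqrt_sq_eq_abs]
  refine Real.sqrt_le_sqrt ?_
  calc A i j ^ 2 ≤ ∑ j', A i j' ^ 2 :=
        Finset.single_le_sum (fun _ _ => sq_nonneg _) (Finset.mem_univ j)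
    _ ≤ ∑ i', ∑ j', A i' j' ^ 2 :=
        Finset.single_le_sum (f := fun i' => ∑ j', A i' j' ^ 2)
          (fun _ _ => Finset.sum_nonneg fun _ _ => sq_nonneg _) (Finset.mem_univ i)

lemma frobNorm_neg (A : Matrix (Fin n) (Fin n) ℝ) : frobNorm (-A) = frobNorm A := by
  simp [frobNorm]

lemma frobNorm_zero : frobNorm (0 : Matrix (Fin n) (Fin n) ℝ) = 0 := by
  simp [frobNorm]

lemma continuous_frobNorm : Continuous (frobNorm : Matrix (Fin n) (Fin n) ℝ → ℝ) := by
  unfold frobNorm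
  fun_prop

lemma tendsto_iff_frobNorm_sub_tendsto_zero {α : Type*} {l : Filter α}
    {A : α → Matrix (Fin n) (Fin n) ℝ} {B : Matrix (Fin n) (Fin n) ℝ} :
    Tendsto A l (𝓝 B) ↔ Tendsto (fun k => frobNorm (A k - B)) l (𝓝 0) := by
  constructor
  · intro h
    simpa [Function.comp_def, frobNorm_zero] using
      (continuous_frobNorm.tendsto 0).comp (tendsto_sub_nhds_zero_iff.2 h)
  · intro h
    refine tendsto_pi_nhds.2 fun i => tendsto_pi_nhds.2 fun j => ?_
    refine tendsto_iff_norm_sub_tendsto_zero.2 (squeeze_zero (fun _ => norm_nonneg _)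
      (fun k => ?_) h)
    exact abs_apply_le_frobNorm (A k - B) i j

end FrobNorm

section DistMatrix

variable {ι E : Type*} [SeminormedAddCommGroup E]

def distMatrix (z : ι → E) : Matrix ι ι ℝ := Matrix.of fun i j => ‖z i - z j‖

lemma continuous_distMatrix : Continuous (distMatrix : (ι → E) → Matrix ι ι ℝ) := by
  unfold distMatrix
  fun_prop

lemma distMatrix_sub_const (z : ι → E) (c : E) :
    distMatrix (fun i => z i - c) = distMatrix z := by
  ext i j
  simp [distMatrix]

end DistMatrix

lemma IsEDM1.exists_mem_closedBall {d n : ℕ} {D : Matrix (Fin n) (Fin n) ℝ} {C : ℝ}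
    (hD : IsEDM1 d D) (hC : ∀ i j, D i j ≤ C) (hC₀ : 0 ≤ C) :
    ∃ z ∈ Metric.closedBall (0 : Fin n → EuclideanSpace ℝ (Fin d)) C, distMatrix z = D := by
  obtain ⟨z, hz⟩ := hD
  have hzD : distMatrix z = D := by ext i j; exact (hz i j).symm
  cases isEmpty_or_nonempty (Fin n) with
  | inl _ => exact ⟨0, Metric.mem_closedBall_self hC₀, Subsingleton.elim _ _⟩
  | inr h =>
    obtain ⟨i₀⟩ := h
    refine ⟨fun i => z i - z i₀, ?_, by rw [distMatrix_sub_const, hzD]⟩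
    rw [mem_closedBall_zero_iff, pi_norm_le_iff_of_nonneg hC₀]
    exact fun i => (hz i i₀).symm.trans_le (hC i i₀)

lemma exists_isEDM1_subseq_tendsto {d n : ℕ} {D : ℕ → Matrix (Fin n) (Fin n) ℝ} {C : ℝ}
    (hD : ∀ k, IsEDM1 d (D k)) (hC : ∀ k i j, D k i j ≤ C) :
    ∃ Dinf, IsEDM1 d Dinf ∧ ∃ φ : ℕ → ℕ, StrictMono φ ∧ Tendsto (D ∘ φ) atTop (𝓝 Dinf) := by
  choose z hz hzD using fun k => (hD k).exists_mem_closedBall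
    (fun i j => (hC k i j).trans (le_max_left C 0)) (le_max_right C 0)
  obtain ⟨w, -, φ, hφ, hlim⟩ := (isCompact_closedBall _ _).tendsto_subseq hz
  refine ⟨distMatrix w, ⟨w, fun _ _ => rfl⟩, φ, hφ, ?_⟩
  rw [show D = distMatrix ∘ z from funext fun k => (hzD k).symm]
  exact (continuous_distMatrix.tendsto w).comp hlim

lemma frobNorm_sub_le_of_mem_minSet {d n : ℕ} {Δ D : Matrix (Fin n) (Fin n) ℝ}
    (hD : D ∈ MinSet d Δ) : frobNorm (D - Δ) ≤ frobNorm Δ := by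
  simpa [frobNorm_neg] using hD.2 0 ⟨0, fun i j => by simp⟩

lemma apply_le_of_mem_minSet {d n : ℕ} {Δ D : Matrix (Fin n) (Fin n) ℝ}
    (hD : D ∈ MinSet d Δ) (i j : Fin n) : D i j ≤ 2 * frobNorm Δ := by
  calc D i j ≤ |(D - Δ) i j| + |Δ i j| := by
        rw [Matrix.sub_apply]
        linarith [le_abs_self (D i j - Δ i j), le_abs_self (Δ i j)]
    _ ≤ frobNorm (D - Δ) + frobNorm Δ :=
        add_le_add (abs_apply_le_frobNorm _ i j) (abs_apply_le_frobNorm _ i j)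
    _ ≤ 2 * frobNorm Δ := by linarith [frobNorm_sub_le_of_mem_minSet hD]

theorem minset_accumulation_point_general {n d : ℕ}
    (Δ : ℕ → Matrix (Fin n) (Fin n) ℝ) (Δinf : Matrix (Fin n) (Fin n) ℝ)
    (hconv : Tendsto (fun k => frobNorm (Δ k - Δinf)) atTop (𝓝 0))
    (D : ℕ → Matrix (Fin n) (Fin n) ℝ) (hD : ∀ k, D k ∈ MinSet d (Δ k)) :
    ∃ φ : ℕ → ℕ, StrictMono φ ∧ ∃ Dinf : Matrix (Fin n) (Fin n) ℝ, IsEDM1 d Dinf ∧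
      Tendsto (fun k => frobNorm (D (φ k) - Dinf)) atTop (𝓝 0) := by
  have hΔlim : Tendsto Δ atTop (𝓝 Δinf) := tendsto_iff_frobNorm_sub_tendsto_zero.2 hconv
  obtain ⟨B, hB⟩ := ((continuous_frobNorm.tendsto Δinf).comp hΔlim).bddAbove_range
  have hbound : ∀ k i j, D k i j ≤ 2 * B := fun k i j =>
    (apply_le_of_mem_minSet (hD k) i j).trans (by linarith [(hB ⟨k, rfl⟩ : frobNorm (Δ k) ≤ B)])
  obtain ⟨Dinf, hDinf, φ, hφ, hlim⟩ := exists_isEDM1_subseq_tendsto (fun k => (hD k).1) hbound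
  exact ⟨φ, hφ, Dinf, hDinf, tendsto_iff_frobNorm_sub_tendsto_zero.1 hlim⟩

/-- Theorem 3.1(a): any sequence of raw-stress minimizers of converging dissimilarity
matrices has an accumulation point in Frobenius norm. -/
theorem minset_accumulation_point {n d : ℕ}
    (Δ : ℕ → Matrix (Fin n) (Fin n) ℝ) (Δinf : Matrix (Fin n) (Fin n) ℝ)
    (hΔ : ∀ k, IsDissim (Δ k)) (hΔinf : IsDissim Δinf)
    (hconv : Tendsto (fun k => frobNorm (Δ k - Δinf)) atTop (𝓝 0))
    (D : ℕ → Matrix (Fin n) (Fin n) ℝ) (hD : ∀ k, D k ∈ MinSet d (Δ k)) :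
    ∃ φ : ℕ → ℕ, StrictMono φ ∧ ∃ Dinf : Matrix (Fin n) (Fin n) ℝ, IsEDM1 d Dinf ∧
      Tendsto (fun k => frobNorm (D (φ k) - Dinf)) atTop (𝓝 0) :=
  minset_accumulation_point_general Δ Δinf hconv D hD
end

section
/- Fix n and d. Let {Δ_k} be a sequence of n×n dissimilarity matrices converging in Frobenius norm to an n×n dissimilarity matrix Δ_∞, let D_k ∈ Min(Δ_k) for each k, and suppose D_∞ is an accumulation point of {D_k} in Frobenius norm (i.e., some subsequence of {D_k} converges to D_∞). Then D_∞ ∈ Min(Δ_∞). -/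
open Filter Topology

noncomputable def vecOf {n : ℕ} (A : Matrix (Fin n) (Fin n) ℝ) :
    EuclideanSpace ℝ (Fin n × Fin n) :=
  (WithLp.equiv 2 _).symm (fun p => A p.1 p.2)

lemma frobNorm_eq {n : ℕ} (A : Matrix (Fin n) (Fin n) ℝ) : frobNorm A = ‖vecOf A‖ := by
  rw [EuclideanSpace.norm_eq, Fintype.sum_prod_type, frobNorm]
  congr 1
  apply Finset.sum_congr rfl
  intro i _
  apply Finset.sum_congr rfl
  intro j _
  simp [vecOf, Real.norm_eq_abs, sq_abs]

lemma vecOf_sub {n : ℕ} (A B : Matrix (Fin n) (Fin n) ℝ) :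
    vecOf (A - B) = vecOf A - vecOf B := rfl

lemma frobNorm_sub_comm {n : ℕ} (A B : Matrix (Fin n) (Fin n) ℝ) :
    frobNorm (A - B) = frobNorm (B - A) := by
  rw [frobNorm_eq, frobNorm_eq, vecOf_sub, vecOf_sub, norm_sub_rev]

lemma frobNorm_sub_le {n : ℕ} (A B C : Matrix (Fin n) (Fin n) ℝ) :
    frobNorm (A - C) ≤ frobNorm (A - B) + frobNorm (B - C) := by
  rw [frobNorm_eq, frobNorm_eq, frobNorm_eq, vecOf_sub, vecOf_sub, vecOf_sub]
  have := dist_triangle (vecOf A) (vecOf B) (vecOf C)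
  simpa [dist_eq_norm] using this

lemma abs_entry_le_frobNorm {n : ℕ} (A : Matrix (Fin n) (Fin n) ℝ) (i j : Fin n) :
    |A i j| ≤ frobNorm A := by
  rw [frobNorm, ← Real.sqrt_sq_eq_abs]
  apply Real.sqrt_le_sqrt
  calc A i j ^ 2 ≤ ∑ j', A i j' ^ 2 :=
        Finset.single_le_sum (f := fun j' => A i j' ^ 2)
          (fun _ _ => sq_nonneg _) (Finset.mem_univ j)
    _ ≤ ∑ i', ∑ j', A i' j' ^ 2 :=
        Finset.single_le_sum (f := fun i' => ∑ j', A i' j' ^ 2)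
          (fun _ _ => Finset.sum_nonneg fun _ _ => sq_nonneg _) (Finset.mem_univ i)

lemma entry_tendsto {n : ℕ} {F : ℕ → Matrix (Fin n) (Fin n) ℝ}
    {L : Matrix (Fin n) (Fin n) ℝ}
    (h : Tendsto (fun k => frobNorm (F k - L)) atTop (𝓝 0)) (i j : Fin n) :
    Tendsto (fun k => F k i j) atTop (𝓝 (L i j)) := by
  rw [tendsto_iff_dist_tendsto_zero]
  apply squeeze_zero (fun k => dist_nonneg) (fun k => ?_) h
  rw [Real.dist_eq]
  have := abs_entry_le_frobNorm (F k - L) i j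
  simpa using this

/-- Theorem 3.1(b): any Frobenius-norm accumulation point of a sequence of raw-stress
minimizers of converging dissimilarity matrices is a minimizer for the limit. -/
theorem minset_closed {n d : ℕ}
    (Δ : ℕ → Matrix (Fin n) (Fin n) ℝ) (Δinf : Matrix (Fin n) (Fin n) ℝ)
    (hΔ : ∀ k, IsDissim (Δ k)) (hΔinf : IsDissim Δinf)
    (hconv : Tendsto (fun k => frobNorm (Δ k - Δinf)) atTop (𝓝 0))
    (D : ℕ → Matrix (Fin n) (Fin n) ℝ) (hD : ∀ k, D k ∈ MinSet d (Δ k))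
    (Dinf : Matrix (Fin n) (Fin n) ℝ)
    (hacc : ∃ φ : ℕ → ℕ, StrictMono φ ∧
      Tendsto (fun k => frobNorm (D (φ k) - Dinf)) atTop (𝓝 0)) :
    Dinf ∈ MinSet d Δinf := by
  obtain ⟨φ, hφ, hDconv⟩ := hacc
  have hΔφ : Tendsto (fun k => frobNorm (Δ (φ k) - Δinf)) atTop (𝓝 0) :=
    hconv.comp hφ.tendsto_atTop
  have hent : ∀ i j, Tendsto (fun k => D (φ k) i j) atTop (𝓝 (Dinf i j)) :=
    fun i j => entry_tendsto hDconv i j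
  constructor
  · -- Dinf is EDM-1
    rcases Nat.eq_zero_or_pos n with hn | hn
    · subst hn
      exact ⟨Fin.elim0, fun i => i.elim0⟩
    · choose z hz using fun k => (hD (φ k)).1
      set i0 : Fin n := ⟨0, hn⟩ with hi0
      set w : ℕ → Fin n → EuclideanSpace ℝ (Fin d) := fun k i => z k i - z k i0 with hw
      have hwd : ∀ k i j, ‖w k i - w k j‖ = D (φ k) i j := by
        intro k i j
        rw [hz]
        congr 1
        simp [hw]
      have hbd : ∀ i, ∃ Ci : ℝ, ∀ k, ‖w k i‖ ≤ Ci := by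
        intro i
        obtain ⟨Ci, hCi⟩ := (hent i i0).bddAbove_range
        refine ⟨Ci, fun k => ?_⟩
        have h1 : ‖w k i‖ = D (φ k) i i0 := by
          have := hwd k i i0
          simpa [hw] using this
        rw [h1]
        exact hCi ⟨k, rfl⟩
      choose C hC using hbd
      obtain ⟨Cm, hCm⟩ : ∃ Cm : ℝ, ∀ i, C i ≤ Cm := Finite.exists_le C
      have hCm0 : 0 ≤ Cm := le_trans (norm_nonneg (w 0 i0)) ((hC i0 0).trans (hCm i0))
      have hball : ∀ k, w k ∈ Metric.closedBall (0 : Fin n → EuclideanSpace ℝ (Fin d)) Cm := by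
        intro k
        rw [Metric.mem_closedBall, dist_zero_right]
        exact (pi_norm_le_iff_of_nonneg hCm0).2 fun i => (hC i k).trans (hCm i)
      obtain ⟨lim, -, ψ, hψ, hlim⟩ :=
        tendsto_subseq_of_bounded Metric.isBounded_closedBall hball
      refine ⟨lim, fun i j => ?_⟩
      have h1 : Tendsto (fun k => D (φ (ψ k)) i j) atTop (𝓝 (Dinf i j)) :=
        (hent i j).comp hψ.tendsto_atTop
      have hi : Tendsto (fun k => w (ψ k) i) atTop (𝓝 (lim i)) :=
        ((continuous_apply i).tendsto lim).comp hlim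
      have hj : Tendsto (fun k => w (ψ k) j) atTop (𝓝 (lim j)) :=
        ((continuous_apply j).tendsto lim).comp hlim
      have h2 : Tendsto (fun k => ‖w (ψ k) i - w (ψ k) j‖) atTop (𝓝 ‖lim i - lim j‖) :=
        (hi.sub hj).norm
      exact tendsto_nhds_unique h1 (h2.congr fun k => hwd (ψ k) i j)
  · intro D' hD'
    have key : ∀ k, frobNorm (Dinf - Δinf) ≤ frobNorm (D' - Δinf)
        + (frobNorm (D (φ k) - Dinf) + 2 * frobNorm (Δ (φ k) - Δinf)) := by
      intro k
      have h1 : frobNorm (Dinf - Δinf) ≤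
          frobNorm (Dinf - D (φ k)) + frobNorm (D (φ k) - Δinf) := frobNorm_sub_le _ _ _
      have h1' : frobNorm (D (φ k) - Δinf) ≤
          frobNorm (D (φ k) - Δ (φ k)) + frobNorm (Δ (φ k) - Δinf) := frobNorm_sub_le _ _ _
      have h2 : frobNorm (D (φ k) - Δ (φ k)) ≤ frobNorm (D' - Δ (φ k)) :=
        (hD (φ k)).2 D' hD'
      have h3 : frobNorm (D' - Δ (φ k)) ≤
          frobNorm (D' - Δinf) + frobNorm (Δinf - Δ (φ k)) := frobNorm_sub_le _ _ _
      have e1 : frobNorm (Dinf - D (φ k)) = frobNorm (D (φ k) - Dinf) := frobNorm_sub_comm _ _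
      have e2 : frobNorm (Δinf - Δ (φ k)) = frobNorm (Δ (φ k) - Δinf) := frobNorm_sub_comm _ _
      linarith
    have hlim : Tendsto (fun k => frobNorm (D' - Δinf)
        + (frobNorm (D (φ k) - Dinf) + 2 * frobNorm (Δ (φ k) - Δinf))) atTop
        (𝓝 (frobNorm (D' - Δinf) + (0 + 2 * 0))) :=
      tendsto_const_nhds.add (hDconv.add (hΔφ.const_mul 2))
    have := ge_of_tendsto' hlim key
    simpa using this
end

section
/- Fix n, d, and δ > 0. Let Δ be an n×n dissimilarity matrix all of whose entries satisfy Δ(i,j) ≤ δ. If the configuration z₁,…,z_n ∈ ℝ^d is a global minimizer of the equal-weight raw stress criterion σ_n(Δ,Z) = (1/n²) Σ_{i,j=1}^n (‖z_i − z_j‖ − Δ(i,j))², then ‖z_i − z_j‖ ≤ 6δ for all i, j = 1,…,n. -/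
/-- The equal-weight raw stress criterion `σ_n(Δ, Z) = (1/n²) ∑_{i,j} (‖z_i - z_j‖ - Δ(i,j))²`. -/
noncomputable def rawStress {n d : ℕ} (Δ : Matrix (Fin n) (Fin n) ℝ)
    (Z : Fin n → EuclideanSpace ℝ (Fin d)) : ℝ :=
  (1 / (n : ℝ) ^ 2) * ∑ i, ∑ j, (‖Z i - Z j‖ - Δ i j) ^ 2


/-!
Moving a single point `z_p` to `z_p - w` changes each residual `‖z_p - z_k‖ - Δ(p,k)` by at most
`‖w‖`, so the stress grows by at most `2 ∑_k (‖w‖² + 2δ‖w‖ - 2⟪z_p - z_k, w⟫)`. At a minimizer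
this is nonnegative for `w = s • u` and every `s > 0`; letting `s → 0` gives the first-order
condition `∑_k ⟪z_p - z_k, u⟫ ≤ nδ‖u‖`. Applying it at `z_i` in direction `z_i - z_j` and at `z_j`
in the opposite direction, the two sums add up to `n‖z_i - z_j‖²`, whence `‖z_i - z_j‖ ≤ 2δ`.
-/

open scoped InnerProductSpace

lemma le_of_forall_pos_le_add_mul {a b c : ℝ} (h : ∀ s > 0, a ≤ b + c * s) : a ≤ b := by
  have hlim : Filter.Tendsto (fun s => b + c * s) (nhdsWithin 0 (Set.Ioi 0)) (nhds b) :=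
    tendsto_nhdsWithin_of_tendsto_nhds <|
      Continuous.tendsto' (f := fun s : ℝ => b + c * s) (by fun_prop) 0 b (by simp)
  exact ge_of_tendsto hlim (eventually_nhdsWithin_of_forall h)

section Stress

variable {ι E : Type*} [Fintype ι] [NormedAddCommGroup E] [InnerProductSpace ℝ E]

lemma sq_norm_sub_sub_le (v w : E) {t δ : ℝ} (ht : |t| ≤ δ) :
    (‖v - w‖ - t) ^ 2 ≤ (‖v‖ - t) ^ 2 + (‖w‖ ^ 2 + 2 * δ * ‖w‖ - 2 * ⟪v, w⟫_ℝ) := by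
  have hexpand : ‖v - w‖ ^ 2 = ‖v‖ ^ 2 - 2 * ⟪v, w⟫_ℝ + ‖w‖ ^ 2 := norm_sub_sq_real v w
  have hlip : |‖v - w‖ - ‖v‖| ≤ ‖w‖ := by
    simpa using abs_norm_sub_norm_le (v - w) v
  have hcross : -(t * (‖v - w‖ - ‖v‖)) ≤ δ * ‖w‖ :=
    calc -(t * (‖v - w‖ - ‖v‖)) ≤ |t| * |‖v - w‖ - ‖v‖| := by
          rw [← abs_mul]; exact neg_le_abs _
      _ ≤ δ * ‖w‖ := mul_le_mul ht hlip (abs_nonneg _) ((abs_nonneg t).trans ht)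
  nlinarith

variable (Δ : ι → ι → ℝ) (Z : ι → E)

noncomputable def rawStressSum : ℝ :=
  ∑ i, ∑ j, (‖Z i - Z j‖ - Δ i j) ^ 2

variable {Δ} {δ : ℝ} (hΔ : ∀ i j, |Δ i j| ≤ δ)
include hΔ

lemma rawStressSum_update_le [DecidableEq ι] (p : ι) (w : E) :
    rawStressSum Δ (Function.update Z p (Z p - w)) ≤
      rawStressSum Δ Z + 2 * ∑ k, (‖w‖ ^ 2 + 2 * δ * ‖w‖ - 2 * ⟪Z p - Z k, w⟫_ℝ) := by
  set gain : ι → ℝ := fun k => ‖w‖ ^ 2 + 2 * δ * ‖w‖ - 2 * ⟪Z p - Z k, w⟫_ℝ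
  have hδ : 0 ≤ δ := (abs_nonneg _).trans (hΔ p p)
  -- A pair `(a, b)` is affected only if one endpoint is `p`; it is charged the gain of the other.
  have hpair : ∀ a b, (‖Function.update Z p (Z p - w) a - Function.update Z p (Z p - w) b‖
      - Δ a b) ^ 2 ≤ (‖Z a - Z b‖ - Δ a b) ^ 2 +
        ((if a = p then gain b else 0) + (if b = p then gain a else 0)) := by
    intro a b
    by_cases ha : a = p <;> by_cases hb : b = p
    · subst ha hb
      have : 0 ≤ gain b := by
        simp only [gain, sub_self, inner_zero_left, mul_zero, sub_zero]; positivity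
      simp only [sub_self, if_true]
      linarith
    · subst ha
      rw [Function.update_self, Function.update_of_ne hb, sub_right_comm, if_pos rfl,
        if_neg hb, add_zero]
      exact sq_norm_sub_sub_le (Z a - Z b) w (hΔ a b)
    · subst hb
      rw [Function.update_self, Function.update_of_ne ha, norm_sub_rev, sub_right_comm,
        norm_sub_rev (Z a), if_neg ha, if_pos rfl, zero_add]
      exact sq_norm_sub_sub_le (Z b - Z a) w (hΔ a b)
    · simp [ha, hb]
  calc rawStressSum Δ (Function.update Z p (Z p - w))
      ≤ ∑ a, ∑ b, ((‖Z a - Z b‖ - Δ a b) ^ 2 +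
          ((if a = p then gain b else 0) + (if b = p then gain a else 0))) :=
        Finset.sum_le_sum fun a _ => Finset.sum_le_sum fun b _ => hpair a b
    _ = rawStressSum Δ Z + 2 * ∑ k, gain k := by
        simp only [Finset.sum_add_distrib, Finset.sum_ite_eq', Finset.mem_univ, if_true,
          Finset.sum_ite_irrel, Finset.sum_const_zero, rawStressSum]
        ring

variable (hmin : ∀ Z' : ι → E, rawStressSum Δ Z ≤ rawStressSum Δ Z')
include hmin

lemma sum_inner_sub_le_of_minimizer (p : ι) (u : E) :
    ∑ k, ⟪Z p - Z k, u⟫_ℝ ≤ Fintype.card ι * δ * ‖u‖ := by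
  classical
  set X := ∑ k, ⟪Z p - Z k, u⟫_ℝ
  set N : ℝ := (Fintype.card ι : ℝ)
  refine le_of_forall_pos_le_add_mul (c := N * ‖u‖ ^ 2 / 2) fun s hs => ?_
  have hmove := (hmin _).trans (rawStressSum_update_le Z hΔ p (s • u))
  have hgain : ∑ k, (‖s • u‖ ^ 2 + 2 * δ * ‖s • u‖ - 2 * ⟪Z p - Z k, s • u⟫_ℝ) =
      s * (N * s * ‖u‖ ^ 2 + 2 * N * δ * ‖u‖ - 2 * X) := by
    simp only [norm_smul, Real.norm_of_nonneg hs.le, real_inner_smul_right,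
      Finset.sum_sub_distrib, Finset.sum_const, Finset.card_univ, nsmul_eq_mul,
      ← Finset.mul_sum, X, N]
    ring
  have : 0 ≤ N * s * ‖u‖ ^ 2 + 2 * N * δ * ‖u‖ - 2 * X :=
    (mul_nonneg_iff_of_pos_left hs).mp (by linarith)
  linarith

lemma norm_sub_le_two_mul_of_minimizer (i j : ι) : ‖Z i - Z j‖ ≤ 2 * δ := by
  have hN : (0 : ℝ) < Fintype.card ι := Nat.cast_pos.mpr (Fintype.card_pos_iff.mpr ⟨i⟩)
  have hδ : 0 ≤ δ := (abs_nonneg _).trans (hΔ i i)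
  have hterm : ∀ k, ⟪Z i - Z k, Z i - Z j⟫_ℝ + ⟪Z j - Z k, Z j - Z i⟫_ℝ = ‖Z i - Z j‖ ^ 2 := by
    intro k
    rw [← neg_sub (Z i) (Z j), inner_neg_right, ← sub_eq_add_neg, ← inner_sub_left,
      sub_sub_sub_cancel_right, real_inner_self_eq_norm_sq]
  have hsum : ∑ k, ⟪Z i - Z k, Z i - Z j⟫_ℝ + ∑ k, ⟪Z j - Z k, Z j - Z i⟫_ℝ =
      Fintype.card ι * ‖Z i - Z j‖ ^ 2 := by
    rw [← Finset.sum_add_distrib, Finset.sum_congr rfl fun k _ => hterm k, Finset.sum_const,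
      Finset.card_univ, nsmul_eq_mul]
  have hi := sum_inner_sub_le_of_minimizer Z hΔ hmin i (Z i - Z j)
  have hj := sum_inner_sub_le_of_minimizer Z hΔ hmin j (Z j - Z i)
  rw [norm_sub_rev (Z j)] at hj
  have hsq : Fintype.card ι * ‖Z i - Z j‖ ^ 2 ≤ Fintype.card ι * (2 * δ * ‖Z i - Z j‖) := by
    linarith
  have := le_of_mul_le_mul_left hsq hN
  nlinarith [norm_nonneg (Z i - Z j)]

end Stress

theorem minimizer_diameter_bound_general {n d : ℕ} (δ : ℝ)
    (Δ : Matrix (Fin n) (Fin n) ℝ) (hΔ : IsDissim Δ) (hbd : ∀ i j, Δ i j ≤ δ)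
    (Z : Fin n → EuclideanSpace ℝ (Fin d))
    (hmin : ∀ Z' : Fin n → EuclideanSpace ℝ (Fin d), rawStress Δ Z ≤ rawStress Δ Z') :
    ∀ i j, ‖Z i - Z j‖ ≤ 6 * δ := by
  intro i j
  have hscale : (0 : ℝ) < 1 / (n : ℝ) ^ 2 := by have := i.pos; positivity
  have hΔδ : ∀ a b, |Δ a b| ≤ δ := fun a b => (abs_of_nonneg (hΔ.2.1 a b)).trans_le (hbd a b)
  have hmin_sum : ∀ Z', rawStressSum Δ Z ≤ rawStressSum Δ Z' :=
    fun Z' => le_of_mul_le_mul_left (hmin Z') hscale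
  have hδ : 0 ≤ δ := (hΔ.2.1 i i).trans (hbd i i)
  linarith [norm_sub_le_two_mul_of_minimizer Z hΔδ hmin_sum i j]

/-- Lemma 4.2: if `Δ` has entries bounded by `δ`, then any global minimizer of the
equal-weight raw stress criterion has all pairwise distances bounded by `6δ`. -/
theorem minimizer_diameter_bound {n d : ℕ} (δ : ℝ) (hδ : 0 < δ)
    (Δ : Matrix (Fin n) (Fin n) ℝ) (hΔ : IsDissim Δ) (hbd : ∀ i j, Δ i j ≤ δ)
    (Z : Fin n → EuclideanSpace ℝ (Fin d))
    (hmin : ∀ Z' : Fin n → EuclideanSpace ℝ (Fin d), rawStress Δ Z ≤ rawStress Δ Z') :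
    ∀ i j, ‖Z i - Z j‖ ≤ 6 * δ :=
  minimizer_diameter_bound_general δ Δ hΔ hbd Z hmin
end

section
/- Let M be a set and d a positive integer. If a sequence of d-dimensional Euclidean pseudometrics D_k on M converges pointwise on M×M to a function D : M×M → ℝ, then D is itself a d-dimensional Euclidean pseudometric: there exists a function f : M → ℝ^d with D(m₁,m₂) = ‖f(m₁) − f(m₂)‖ for all m₁, m₂ ∈ M. That is, the cone of d-dimensional Euclidean pseudometrics on M is closed in the topology of pointwise convergence. -/
open Filter Topology

/-- The cone of `d`-dimensional Euclidean pseudometrics on a set `M` is closed under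
pointwise convergence: a pointwise limit of functions of the form
`(m₁, m₂) ↦ ‖mds(m₁) - mds(m₂)‖` is again of that form. -/
theorem eucPseudo_closed_pointwise {M : Type*} (d : ℕ) (hd : 0 < d)
    (D : ℕ → M × M → ℝ) (Dinf : M × M → ℝ)
    (hD : ∀ k, ∃ mds : M → EuclideanSpace ℝ (Fin d),
      ∀ m₁ m₂, D k (m₁, m₂) = ‖mds m₁ - mds m₂‖)
    (hconv : ∀ m₁ m₂, Tendsto (fun k => D k (m₁, m₂)) atTop (𝓝 (Dinf (m₁, m₂)))) :
    ∃ f : M → EuclideanSpace ℝ (Fin d), ∀ m₁ m₂, Dinf (m₁, m₂) = ‖f m₁ - f m₂‖ := by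
  classical
  cases isEmpty_or_nonempty M with
  | inl h => exact ⟨fun _ => 0, fun m₁ => isEmptyElim m₁⟩
  | inr h =>
    obtain ⟨m₀⟩ := h
    choose mds hmds using hD
    set g : ℕ → M → EuclideanSpace ℝ (Fin d) := fun k m => mds k m - mds k m₀ with hg
    have hnorm : ∀ k m, ‖g k m‖ = D k (m, m₀) := fun k m => (hmds k m m₀).symm
    have hdiff : ∀ k m₁ m₂, ‖g k m₁ - g k m₂‖ = D k (m₁, m₂) := by
      intro k m₁ m₂
      have : g k m₁ - g k m₂ = mds k m₁ - mds k m₂ := by simp [hg]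
      rw [this, ← hmds]
    let U : Ultrafilter ℕ := Ultrafilter.of atTop
    have hUle : (U : Filter ℕ) ≤ atTop := Ultrafilter.of_le atTop
    have hbdd : ∀ m, ∃ C, ∀ k, ‖g k m‖ ≤ C := by
      intro m
      obtain ⟨C, hC⟩ := (hconv m m₀).bddAbove_range
      exact ⟨C, fun k => (hnorm k m) ▸ hC (Set.mem_range_self k)⟩
    have hlim : ∀ m, ∃ x, Tendsto (fun k => g k m) U (𝓝 x) := by
      intro m
      obtain ⟨C, hC⟩ := hbdd m
      obtain ⟨x, -, hx⟩ :=
        (isCompact_closedBall (0 : EuclideanSpace ℝ (Fin d)) C).ultrafilter_le_nhds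
          (U.map fun k => g k m)
          (by
            rw [Ultrafilter.coe_map, Filter.le_principal_iff, Filter.mem_map]
            exact Filter.univ_mem' fun k => by simpa using hC k)
      exact ⟨x, hx⟩
    choose f hf using hlim
    refine ⟨f, fun m₁ m₂ => ?_⟩
    have h1 : Tendsto (fun k => ‖g k m₁ - g k m₂‖) U (𝓝 ‖f m₁ - f m₂‖) :=
      ((hf m₁).sub (hf m₂)).norm
    have h2 : Tendsto (fun k => ‖g k m₁ - g k m₂‖) U (𝓝 (Dinf (m₁, m₂))) := by
      have := (hconv m₁ m₂).mono_left hUle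
      simpa [hdiff] using this
    exact tendsto_nhds_unique h2 h1
end

section
/- Let (M, Δ_∞) be a metric space, c > 0, d a positive integer, and let m₁,…,m_n ∈ M and z₁,…,z_n ∈ ℝ^d satisfy ‖z_i − z_j‖ ≤ c · Δ_∞(m_i, m_j) for every 1 ≤ i, j ≤ n. Then there exists a function F : M → ℝ^d with F(m_i) = z_i for i = 1,…,n such that the function D̄(m, m′) = ‖F(m) − F(m′)‖ satisfies |D̄(m₁,m₂) − D̄(m₁′,m₂′)| ≤ c√(3d) · (Δ_∞(m₁,m₁′)² + Δ_∞(m₂,m₂′)²)^{1/2} for every m₁, m₂, m₁′, m₂′ ∈ M. -/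
/-!
The coordinates of `i ↦ z i` are `c`-Lipschitz on `{m i}`, so McShane's extension makes them
`c`-Lipschitz on all of `M`, and the resulting `F` is `c√d`-Lipschitz. Then
`|D̄(m₁,m₂) - D̄(m₁',m₂')| ≤ ‖F m₁ - F m₁'‖ + ‖F m₂ - F m₂'‖ ≤ c√d (Δ₁ + Δ₂) ≤ c√(2d) (Δ₁² + Δ₂²)^{1/2}`
with `Δₖ = Δ_∞(mₖ, mₖ')`.
-/

open scoped NNReal ENNReal

theorem add_le_sqrt_two_mul_sqrt_sq_add_sq (a b : ℝ) : a + b ≤ √2 * √(a ^ 2 + b ^ 2) := by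
  rw [← Real.sqrt_mul zero_le_two]
  exact (le_abs_self _).trans (Real.abs_le_sqrt add_sq_le)

theorem Function.factorsThrough_of_dist_le {ι α β : Type*} [PseudoMetricSpace α] [MetricSpace β]
    {m : ι → α} {z : ι → β} {K : ℝ} (h : ∀ i j, dist (z i) (z j) ≤ K * dist (m i) (m j)) :
    z.FactorsThrough m := fun i j hij =>
  dist_le_zero.1 <| by simpa [hij] using h i j

theorem exists_lipschitzOnWith_range_of_dist_le {ι α β : Type*} [PseudoMetricSpace α]
    [MetricSpace β] [Nonempty β] {m : ι → α} {z : ι → β} {K : ℝ≥0}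
    (h : ∀ i j, dist (z i) (z j) ≤ K * dist (m i) (m j)) :
    ∃ f : α → β, (∀ i, f (m i) = z i) ∧ LipschitzOnWith K f (Set.range m) := by
  have hz := Function.factorsThrough_of_dist_le h
  refine ⟨Function.extend m z fun _ => Classical.arbitrary β, hz.extend_apply _, ?_⟩
  refine LipschitzOnWith.of_dist_le_mul ?_
  rintro _ ⟨i, rfl⟩ _ ⟨j, rfl⟩
  simpa only [hz.extend_apply] using h i j

theorem LipschitzOnWith.extend_euclideanSpace {α ι : Type*} [PseudoMetricSpace α] [Fintype ι]
    {f : α → EuclideanSpace ℝ ι} {s : Set α} {K : ℝ≥0} (hf : LipschitzOnWith K f s) :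
    ∃ g : α → EuclideanSpace ℝ ι,
      LipschitzWith (NNReal.sqrt (Fintype.card ι) * K) g ∧ Set.EqOn f g s := by
  obtain ⟨g, hg, hfg⟩ := by
    simpa using ((PiLp.lipschitzWith_ofLp 2 _).comp_lipschitzOnWith hf).extend_pi
  refine ⟨WithLp.toLp 2 ∘ g, ?_, fun x hx => ?_⟩
  · have := (PiLp.lipschitzWith_toLp 2 fun _ : ι => ℝ).comp hg
    rwa [NNReal.sqrt_eq_rpow, ← show (1 / (2 : ℝ≥0∞)).toReal = 1 / 2 by norm_num]
  · simp [← hfg hx]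

theorem LipschitzWith.abs_dist_sub_dist_le {α β : Type*} [PseudoMetricSpace α]
    [PseudoMetricSpace β] {K : ℝ≥0} {F : α → β} (hF : LipschitzWith K F) (a b a' b' : α) :
    |dist (F a) (F b) - dist (F a') (F b')| ≤ K * √2 * √(dist a a' ^ 2 + dist b b' ^ 2) :=
  calc |dist (F a) (F b) - dist (F a') (F b')|
      ≤ dist (F a) (F a') + dist (F b) (F b') := dist_dist_dist_le _ _ _ _
    _ ≤ K * (dist a a' + dist b b') := by
      rw [mul_add]; exact add_le_add (hF.dist_le_mul _ _) (hF.dist_le_mul _ _)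
    _ ≤ K * (√2 * √(dist a a' ^ 2 + dist b b' ^ 2)) := by
      gcongr; exact add_le_sqrt_two_mul_sqrt_sq_add_sq _ _
    _ = K * √2 * √(dist a a' ^ 2 + dist b b' ^ 2) := (mul_assoc _ _ _).symm

theorem lipschitz_configuration_interpolation_general {M : Type*} [MetricSpace M]
    (c : ℝ) (hc : 0 < c) (d : ℕ)
    (n : ℕ) (m : Fin n → M) (z : Fin n → EuclideanSpace ℝ (Fin d))
    (h : ∀ i j, ‖z i - z j‖ ≤ c * dist (m i) (m j)) :
    ∃ F : M → EuclideanSpace ℝ (Fin d), (∀ i, F (m i) = z i) ∧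
      ∀ m₁ m₂ m₁' m₂' : M,
        |‖F m₁ - F m₂‖ - ‖F m₁' - F m₂'‖| ≤
          c * Real.sqrt (3 * d) * Real.sqrt (dist m₁ m₁' ^ 2 + dist m₂ m₂' ^ 2) := by
  obtain ⟨f, hfz, hf⟩ :=
    exists_lipschitzOnWith_range_of_dist_le (m := m) (z := z) (K := c.toNNReal)
      (by simpa [dist_eq_norm, hc.le] using h)
  obtain ⟨F, hF, hfF⟩ := hf.extend_euclideanSpace
  refine ⟨F, fun i => (hfF ⟨i, rfl⟩).symm.trans (hfz i), fun m₁ m₂ m₁' m₂' => ?_⟩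
  simp only [← dist_eq_norm]
  refine (hF.abs_dist_sub_dist_le m₁ m₂ m₁' m₂').trans ?_
  have hconst : √(d : ℝ) * √2 ≤ √(3 * d) := by
    rw [← Real.sqrt_mul (Nat.cast_nonneg d)]
    exact Real.sqrt_le_sqrt (by linarith [(Nat.cast_nonneg d : (0 : ℝ) ≤ d)])
  refine mul_le_mul_of_nonneg_right ?_ (Real.sqrt_nonneg _)
  rw [NNReal.coe_mul, Real.coe_sqrt, Fintype.card_fin, NNReal.coe_natCast,
    Real.coe_toNNReal _ hc.le, mul_right_comm, mul_comm c]
  exact mul_le_mul_of_nonneg_right hconst hc.le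

/-- Interpolation of a configuration `z₁, …, z_n ⊂ ℝ^d` satisfying
`‖z_i - z_j‖ ≤ c · dist(m_i, m_j)` by a function `F : M → ℝ^d` whose associated
pseudometric `D̄(m, m') = ‖F m - F m'‖` is `c√(3d)`-Lipschitz with respect to the
`ℓ²` product metric on `M × M`. -/
theorem lipschitz_configuration_interpolation {M : Type*} [MetricSpace M]
    (c : ℝ) (hc : 0 < c) (d : ℕ) (hd : 0 < d)
    (n : ℕ) (m : Fin n → M) (z : Fin n → EuclideanSpace ℝ (Fin d))
    (h : ∀ i j, ‖z i - z j‖ ≤ c * dist (m i) (m j)) :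
    ∃ F : M → EuclideanSpace ℝ (Fin d), (∀ i, F (m i) = z i) ∧
      ∀ m₁ m₂ m₁' m₂' : M,
        |‖F m₁ - F m₂‖ - ‖F m₁' - F m₂'‖| ≤
          c * Real.sqrt (3 * d) * Real.sqrt (dist m₁ m₁' ^ 2 + dist m₂ m₂' ^ 2) :=
  lipschitz_configuration_interpolation_general c hc d n m z h
end
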